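/- arXiv:1801.10598 — 4 statements merged into one kernel-verified Lean document; each statement's English description precedes it below -/
import Mathlib

section
/- Fix $T>0$, $H\in(0,1)$, $\mu\in\mathbb{R}$, and define $\sigma_u^-(s,t)=\frac{(t-s)^H}{u+\mu(t-s)-\frac{1}{2}(t^{2H}-s^{2H})}$ for $0\le s\le t\le T$. Then for all sufficiently large $u$, the function $\sigma_u^-$ attains its maximum over the triangle $\{(s,t):0\le s\le t\le T\}$ at the unique point $(s,t)=(0,T)$. -/
/-- The standard deviation-type function `σ_u^-` from the drawdown analysis. -/
noncomputable def sigmaMinus (H μ u s t : ℝ) : ℝ :=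
  (t - s) ^ H / (u + μ * (t - s) - (t ^ (2*H) - s ^ (2*H)) / 2)

section aux

variable {T H μ : ℝ}

/-- The concavity-type gap bound `H * T^(H-1) * (T - τ) ≤ T^H - τ^H`. -/
lemma rpow_gap (hT : 0 < T) (hH0 : 0 < H) (hH1 : H < 1) {τ : ℝ} (hτ0 : 0 ≤ τ) (hτT : τ ≤ T) :
    H * T ^ (H - 1) * (T - τ) ≤ T ^ H - τ ^ H := by
  have geom : τ ^ H * T ^ (1 - H) ≤ H * τ + (1 - H) * T :=
    Real.geom_mean_le_arith_mean2_weighted hH0.le (by linarith) hτ0 hT.le (by ring)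
  have hr : (0:ℝ) < T ^ (H - 1) := Real.rpow_pos_of_pos hT _
  have hcan : T ^ (1 - H) * T ^ (H - 1) = 1 := by
    rw [← Real.rpow_add hT]; norm_num
  have hTH : T ^ H = T * T ^ (H - 1) := by
    nth_rewrite 1 [show H = 1 + (H - 1) by ring]
    rw [Real.rpow_add hT, Real.rpow_one]
  have h' : τ ^ H ≤ (H * τ + (1 - H) * T) * T ^ (H - 1) := by
    calc τ ^ H = τ ^ H * (T ^ (1 - H) * T ^ (H - 1)) := by rw [hcan, mul_one]
      _ = τ ^ H * T ^ (1 - H) * T ^ (H - 1) := by ring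
      _ ≤ _ := mul_le_mul_of_nonneg_right geom hr.le
  nlinarith [h', hTH]

/-- The key bound on the correction term. -/
lemma key_bound (hT : 0 < T) (hH0 : 0 < H) (hH1 : H < 1) {s t : ℝ}
    (hs : 0 ≤ s) (hst : s ≤ t) (htT : t ≤ T) :
    (t - s) ^ H * (μ * T - T ^ (2*H) / 2) -
      T ^ H * (μ * (t - s) - (t ^ (2*H) - s ^ (2*H)) / 2) ≤
    (|μ| * T * (1 + 1/H) + T ^ (2*H) / 2) * (T ^ H - (t - s) ^ H) := by
  have hτ0 : 0 ≤ t - s := by linarith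
  have hτT : t - s ≤ T := by linarith
  have hp : (t - s) ^ H ≤ T ^ H := Real.rpow_le_rpow hτ0 hτT hH0.le
  have hp0 : 0 ≤ (t - s) ^ H := Real.rpow_nonneg hτ0 H
  have hq0 : 0 < T ^ H := Real.rpow_pos_of_pos hT H
  have ha : t ^ (2*H) ≤ T ^ (2*H) :=
    Real.rpow_le_rpow (hs.trans hst) htT (by linarith)
  have hb : 0 ≤ s ^ (2*H) := Real.rpow_nonneg hs _
  have hab : s ^ (2*H) ≤ t ^ (2*H) := Real.rpow_le_rpow hs hst (by linarith)
  have hc0 : 0 < T ^ (2*H) := Real.rpow_pos_of_pos hT _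
  have hgap := rpow_gap hT hH0 hH1 hτ0 hτT
  have hTH : T ^ H = T * T ^ (H - 1) := by
    nth_rewrite 1 [show H = 1 + (H - 1) by ring]
    rw [Real.rpow_add hT, Real.rpow_one]
  have hμ0 : 0 ≤ |μ| := abs_nonneg μ
  -- term 2 bound
  have h2 : T ^ H * (t ^ (2*H) - s ^ (2*H)) - (t - s) ^ H * T ^ (2*H)
      ≤ T ^ (2*H) * (T ^ H - (t - s) ^ H) := by nlinarith
  -- term 1 bound
  have hb1 : μ * (T * ((t - s) ^ H - T ^ H)) ≤ |μ| * T * (T ^ H - (t - s) ^ H) := by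
    have hx : T * ((t - s) ^ H - T ^ H) ≤ 0 := by nlinarith
    calc μ * (T * ((t - s) ^ H - T ^ H)) ≤ |μ * (T * ((t - s) ^ H - T ^ H))| := le_abs_self _
      _ = |μ| * |T * ((t - s) ^ H - T ^ H)| := abs_mul _ _
      _ = |μ| * -(T * ((t - s) ^ H - T ^ H)) := by rw [abs_of_nonpos hx]
      _ = |μ| * T * (T ^ H - (t - s) ^ H) := by ring
  have hb2 : μ * (T ^ H * (T - (t - s))) ≤ |μ| * T ^ H * (T - (t - s)) := by
    have hx : 0 ≤ T ^ H * (T - (t - s)) := by nlinarith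
    calc μ * (T ^ H * (T - (t - s))) ≤ |μ * (T ^ H * (T - (t - s)))| := le_abs_self _
      _ = |μ| * |T ^ H * (T - (t - s))| := abs_mul _ _
      _ = |μ| * (T ^ H * (T - (t - s))) := by rw [abs_of_nonneg hx]
      _ = |μ| * T ^ H * (T - (t - s)) := by ring
  have h1 : μ * ((t - s) ^ H * T - T ^ H * (t - s)) ≤
      |μ| * T * (T ^ H - (t - s) ^ H) + |μ| * T ^ H * (T - (t - s)) := by
    calc μ * ((t - s) ^ H * T - T ^ H * (t - s))
        = μ * (T * ((t - s) ^ H - T ^ H)) + μ * (T ^ H * (T - (t - s))) := by ring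
      _ ≤ _ := add_le_add hb1 hb2
  -- convert |μ| * T^H * (T - τ) into a multiple of the gap
  have h3 : |μ| * T ^ H * (T - (t - s)) ≤ (|μ| * T / H) * (T ^ H - (t - s) ^ H) := by
    have heq : |μ| * T ^ H * (T - (t - s))
        = (|μ| * T / H) * (H * T ^ (H - 1) * (T - (t - s))) := by
      rw [hTH]; field_simp
    rw [heq]
    exact mul_le_mul_of_nonneg_left hgap (by positivity)
  have hC : |μ| * T / H = |μ| * T * (1/H) := by ring
  nlinarith [h1, h2, h3]

end aux

theorem sigmaMinus_unique_maximizer (T H μ : ℝ) (hT : 0 < T) (hH : H ∈ Set.Ioo (0:ℝ) 1) :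
    ∃ u0 : ℝ, ∀ u : ℝ, u0 ≤ u →
      (∀ s t : ℝ, 0 ≤ s → s ≤ t → t ≤ T →
          0 < u + μ * (t - s) - (t ^ (2*H) - s ^ (2*H)) / 2) ∧
      (∀ s t : ℝ, 0 ≤ s → s ≤ t → t ≤ T →
          sigmaMinus H μ u s t ≤ sigmaMinus H μ u 0 T ∧
          (sigmaMinus H μ u s t = sigmaMinus H μ u 0 T → s = 0 ∧ t = T)) := by
  obtain ⟨hH0, hH1⟩ := hH
  obtain ⟨C, hCdef⟩ : ∃ C : ℝ, C = |μ| * T * (1 + 1/H) + T ^ (2*H) / 2 := ⟨_, rfl⟩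
  have hc0 : 0 < T ^ (2*H) := Real.rpow_pos_of_pos hT _
  have hC0 : 0 ≤ C := by rw [hCdef]; positivity
  refine ⟨|μ| * T + T ^ (2*H) / 2 + C + 1, fun u hu => ?_⟩
  have hμ0 : 0 ≤ |μ| := abs_nonneg μ
  have huC : C + 1 ≤ u := by
    have h9 : (0:ℝ) ≤ |μ| * T + T ^ (2*H) / 2 := by positivity
    linarith
  -- positivity of the denominator
  have hpos : ∀ s t : ℝ, 0 ≤ s → s ≤ t → t ≤ T →
      0 < u + μ * (t - s) - (t ^ (2*H) - s ^ (2*H)) / 2 := by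
    intro s t hs hst htT
    have hτ0 : 0 ≤ t - s := by linarith
    have hτT : t - s ≤ T := by linarith
    have ha : t ^ (2*H) ≤ T ^ (2*H) :=
      Real.rpow_le_rpow (hs.trans hst) htT (by linarith)
    have hb : 0 ≤ s ^ (2*H) := Real.rpow_nonneg hs _
    have hμτ : -(|μ| * T) ≤ μ * (t - s) := by
      have h1 : |μ * (t - s)| ≤ |μ| * T := by
        rw [abs_mul, abs_of_nonneg hτ0]
        exact mul_le_mul_of_nonneg_left hτT hμ0
      linarith [neg_abs_le (μ * (t - s))]
    linarith
  refine ⟨hpos, fun s t hs hst htT => ?_⟩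
  have hτ0 : 0 ≤ t - s := by linarith
  have hτT : t - s ≤ T := by linarith
  have hD : 0 < u + μ * (t - s) - (t ^ (2*H) - s ^ (2*H)) / 2 := hpos s t hs hst htT
  have hDT : 0 < u + μ * (T - 0) - (T ^ (2*H) - (0:ℝ) ^ (2*H)) / 2 :=
    hpos 0 T le_rfl hT.le le_rfl
  have hz : (0:ℝ) ^ (2*H) = 0 := Real.zero_rpow (by positivity)
  have hp : (t - s) ^ H ≤ T ^ H := Real.rpow_le_rpow hτ0 hτT hH0.le
  have hp0 : 0 ≤ (t - s) ^ H := Real.rpow_nonneg hτ0 H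
  have hq0 : 0 < T ^ H := Real.rpow_pos_of_pos hT H
  have hkey := key_bound (μ := μ) hT hH0 hH1 hs hst htT
  rw [← hCdef] at hkey
  -- main cross-multiplied inequality
  have hcross : (t - s) ^ H * (u + μ * (T - 0) - (T ^ (2*H) - (0:ℝ) ^ (2*H)) / 2)
      ≤ (T - 0) ^ H * (u + μ * (t - s) - (t ^ (2*H) - s ^ (2*H)) / 2) := by
    rw [hz, sub_zero, sub_zero]
    nlinarith [hkey, mul_nonneg (show (0:ℝ) ≤ u - C by linarith) (sub_nonneg.2 hp)]
  constructor
  · unfold sigmaMinus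
    rw [div_le_div_iff₀ hD hDT]
    exact hcross
  · intro heq
    unfold sigmaMinus at heq
    rw [div_eq_div_iff hD.ne' hDT.ne'] at heq
    rw [hz, sub_zero, sub_zero] at heq
    have hpq : (t - s) ^ H = T ^ H := by
      by_contra hne
      have hlt : (t - s) ^ H < T ^ H := lt_of_le_of_ne hp hne
      nlinarith [heq, hkey,
        mul_pos (show (0:ℝ) < u - C by linarith) (sub_pos.2 hlt)]
    have htsT : t - s = T := by
      by_contra hne
      have hlt : t - s < T := lt_of_le_of_ne hτT hne
      have : (t - s) ^ H < T ^ H := Real.rpow_lt_rpow hτ0 hlt hH0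
      linarith [hpq ▸ this]
    constructor <;> linarith
end

section
/- Fix $T>0$, $H\in(0,1)$, $\mu\in\mathbb{R}$, and let $\sigma_u^-(s,t)=\frac{(t-s)^H}{u+\mu(t-s)-\frac{1}{2}(t^{2H}-s^{2H})}$. For any family $\delta_u>0$ with $\delta_u\to 0$ as $u\to\infty$, we have $\sup_{(s,t)\in[0,\delta_u]\times[T-\delta_u,T]}\left|\frac{1-\sigma_u^-(s,t)/\sigma_u^-(0,T)}{\frac{H(T-t)}{T}+\frac{H}{T}s+\frac{1}{2u}s^{2H}}-1\right|\to 0$ as $u\to\infty$ (with the convention that the ratio is $1$ when $(s,t)=(0,T)$). -/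
set_option maxHeartbeats 1000000

open Filter

lemma bern_two_sided {H x : ℝ} (hH0 : 0 < H) (hH1 : H < 1) (hx0 : 0 ≤ x) (hx : x ≤ 1/2) :
    1 - H*x - 2*x^2 ≤ (1-x)^H ∧ (1-x)^H ≤ 1 - H*x := by
  have h1x : (0:ℝ) < 1 - x := by linarith
  constructor
  · have hb : (1-x)^(1-H) ≤ 1 - (1-H)*x := by
      have h := rpow_one_add_le_one_add_mul_self (show (-1:ℝ) ≤ -x by linarith)
        (show (0:ℝ) ≤ 1-H by linarith) (by linarith)
      rw [show (1:ℝ) + -x = 1 - x by ring] at h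
      linarith
    have hmul : (1-x)^H * (1-x)^(1-H) = 1 - x := by
      rw [← Real.rpow_add h1x]
      norm_num
    have hy0 : 0 < (1-x)^H := Real.rpow_pos_of_pos h1x _
    have hpos : 0 < 1 - (1-H)*x := by nlinarith
    have h2 : 1 - x ≤ (1-x)^H * (1 - (1-H)*x) := by
      calc 1 - x = (1-x)^H * (1-x)^(1-H) := hmul.symm
        _ ≤ (1-x)^H * (1 - (1-H)*x) := mul_le_mul_of_nonneg_left hb hy0.le
    have h3 : (1 - H*x - 2*x^2) * (1 - (1-H)*x) ≤ 1 - x := by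
      nlinarith [sq_nonneg (H*x), sq_nonneg x,
        mul_nonneg (mul_nonneg (show (0:ℝ) ≤ 1-H by linarith) (mul_nonneg hx0 hx0))
          (show (0:ℝ) ≤ 1/2 - x by linarith)]
    exact le_of_mul_le_mul_right (by linarith) hpos
  · have h := rpow_one_add_le_one_add_mul_self (show (-1:ℝ) ≤ -x by linarith) hH0.le hH1.le
    rw [show (1:ℝ) + -x = 1 - x by ring] at h
    linarith

lemma pow_lb {p x : ℝ} (hp2 : p ≤ 2) (hx0 : 0 ≤ x) (hx : x ≤ 1/2) :
    1 - 2*x ≤ (1-x)^p := by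
  have h1x : (0:ℝ) < 1 - x := by linarith
  have h1 : (1-x)^(2:ℝ) ≤ (1-x)^p := Real.rpow_le_rpow_of_exponent_ge h1x (by linarith) hp2
  have h2 : (1-x)^(2:ℝ) = (1-x)*(1-x) := by
    rw [show (2:ℝ) = ((2:ℕ):ℝ) by norm_num, Real.rpow_natCast]
    ring
  have h3 : 1 - 2*x ≤ (1-x)^(2:ℝ) := by
    rw [h2]; nlinarith [sq_nonneg x]
  exact h3.trans h1

theorem sigmaMinus_local_expansion (T H μ : ℝ) (hT : 0 < T) (hH : H ∈ Set.Ioo (0:ℝ) 1)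
    (δ : ℝ → ℝ) (hδpos : ∀ u, 0 < δ u) (hδ : Tendsto δ atTop (nhds 0)) :
    ∀ ε : ℝ, 0 < ε → ∃ u0 : ℝ, ∀ u : ℝ, u0 ≤ u →
      ∀ s t : ℝ, 0 ≤ s → s ≤ δ u → T - δ u ≤ t → t ≤ T → (s, t) ≠ ((0:ℝ), T) →
        |(1 - sigmaMinus H μ u s t / sigmaMinus H μ u 0 T) /
            (H * (T - t) / T + H / T * s + s ^ (2*H) / (2*u)) - 1| ≤ ε := by
  intro ε hε
  obtain ⟨hH0, hH1⟩ := hH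
  set T2 := T ^ (2*H) with hT2def
  clear_value T2
  have hT2pos : 0 < T2 := by rw [hT2def]; positivity
  set C0 := (|μ| * T + T2) with hC0def
  clear_value C0
  have hmuT0 : 0 ≤ |μ| * T := mul_nonneg (abs_nonneg μ) hT.le
  have hC0 : 0 ≤ C0 := by rw [hC0def]; linarith
  have hηpos : (0:ℝ) < min (T/4) (ε*H*T/32) := lt_min (by positivity) (by positivity)
  obtain ⟨u1, hu1⟩ := eventually_atTop.mp (hδ.eventually (gt_mem_nhds hηpos))
  refine ⟨max u1 (max (2*C0+2) (max (16*C0/(ε*H)) (2*C0/ε))), ?_⟩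
  intro u hu s t hs0 hs1 ht1 ht2 hne
  have hδη : δ u < min (T/4) (ε*H*T/32) := hu1 u (le_trans (le_max_left _ _) hu)
  have hδ4 : δ u ≤ T/4 := le_trans hδη.le (min_le_left _ _)
  have hδ32 : δ u ≤ ε*H*T/32 := le_trans hδη.le (min_le_right _ _)
  have hu2 : 2*C0+2 ≤ u :=
    le_trans (le_trans (le_max_left _ _) (le_max_right u1 _)) hu
  have hu3' : 16*C0/(ε*H) ≤ u :=
    le_trans (le_trans (le_trans (le_max_left _ _) (le_max_right _ _)) (le_max_right u1 _)) hu
  have hu4' : 2*C0/ε ≤ u :=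
    le_trans (le_trans (le_trans (le_max_right _ _) (le_max_right _ _)) (le_max_right u1 _)) hu
  have hupos : 0 < u := by linarith
  have hu3 : 16*C0 ≤ ε*H*u := by
    rw [div_le_iff₀ (by positivity)] at hu3'; linarith
  have hu4 : 2*C0 ≤ ε*u := by
    rw [div_le_iff₀ hε] at hu4'; linarith
  -- geometry
  have hsT : s ≤ T := by linarith
  have ht0 : 0 < t := by linarith
  have hts : 0 < t - s := by linarith
  have hxnum : 0 < T - t + s := by
    by_contra hcon
    push_neg at hcon
    have h1 : s = 0 := le_antisymm (by linarith) hs0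
    have h2 : t = T := by linarith
    exact hne (by rw [h1, h2])
  set x := (T - t + s)/T with hxdef
  clear_value x
  have hx0 : 0 < x := by rw [hxdef]; positivity
  have hxhalf : x ≤ 1/2 := by
    rw [hxdef, div_le_iff₀ hT]; linarith
  have hx16 : x ≤ ε*H/16 := by
    rw [hxdef, div_le_iff₀ hT]; linarith
  have hTx : t - s = T*(1-x) := by
    rw [hxdef]; field_simp; ring
  set y := (1-x)^H with hydef
  clear_value y
  have hy1 : 1 - H*x - 2*x^2 ≤ y := by
    rw [hydef]; exact (bern_two_sided hH0 hH1 hx0.le hxhalf).1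
  have hy2 : y ≤ 1 - H*x := by
    rw [hydef]; exact (bern_two_sided hH0 hH1 hx0.le hxhalf).2
  have hy0 : 0 < y := by
    rw [hydef]; exact Real.rpow_pos_of_pos (by linarith) H
  set s2 := s ^ (2*H) with hs2def
  set t2 := t ^ (2*H) with ht2def
  clear_value s2 t2
  have hs2a : 0 ≤ s2 := by rw [hs2def]; exact Real.rpow_nonneg hs0 _
  have hs2b : s2 ≤ T2 := by
    rw [hs2def, hT2def]; exact Real.rpow_le_rpow hs0 hsT (by linarith)
  have ht2a : 0 ≤ t2 := by rw [ht2def]; exact Real.rpow_nonneg ht0.le _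
  have ht2b : t2 ≤ T2 := by
    rw [ht2def, hT2def]; exact Real.rpow_le_rpow ht0.le ht2 (by linarith)
  -- bound on T2 - t2
  have hxp : 0 ≤ (T-t)/T := div_nonneg (by linarith) hT.le
  have hxplex : (T-t)/T ≤ x := by
    rw [hxdef]; gcongr; linarith
  have hTt2 : T2 - t2 ≤ 2*T2*x := by
    have e1 : (t:ℝ) = T*(1 - (T-t)/T) := by field_simp; ring
    have e2 : t2 = T2 * (1 - (T-t)/T)^(2*H) := by
      rw [ht2def, hT2def]
      nth_rewrite 1 [e1]
      rw [Real.mul_rpow hT.le (show (0:ℝ) ≤ 1 - (T-t)/T by rw [sub_nonneg, div_le_one hT]; linarith)]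
    have e3 : 1 - 2*((T-t)/T) ≤ (1 - (T-t)/T)^(2*H) := pow_lb (by linarith) hxp (by linarith)
    have e4 : T2*(1 - 2*((T-t)/T)) ≤ t2 := by
      rw [e2]; exact mul_le_mul_of_nonneg_left e3 hT2pos.le
    have e5 : 2*T2*((T-t)/T) ≤ 2*T2*x := by
      apply mul_le_mul_of_nonneg_left hxplex (by linarith)
    linarith
  have hTt2' : 0 ≤ T2 - t2 := by linarith
  -- A and B
  set A := u + μ*T - T2/2 with hAdef
  set B := u + μ*(t-s) - (t2 - s2)/2 with hBdef
  clear_value A B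
  have habs0 : |μ*T| = |μ| * T := by rw [abs_mul, abs_of_pos hT]
  have habs1 : μ*T ≤ |μ| * T := by
    rw [← habs0]; exact le_abs_self _
  have habs2 : -(|μ| * T) ≤ μ*T := by
    rw [← habs0]; exact neg_abs_le _
  have habs0' : |μ*(t-s)| = |μ| * (t-s) := by rw [abs_mul, abs_of_pos hts]
  have habsts : |μ| * (t-s) ≤ |μ| * T := mul_le_mul_of_nonneg_left (by linarith) (abs_nonneg μ)
  have habs3 : μ*(t-s) ≤ |μ| * T := by
    have := le_abs_self (μ*(t-s)); rw [habs0'] at this; linarith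
  have habs4 : -(|μ| * T) ≤ μ*(t-s) := by
    have := neg_abs_le (μ*(t-s)); rw [habs0'] at this; linarith
  have hA1 : u - C0 ≤ A := by rw [hAdef, hC0def]; linarith
  have hA2 : A ≤ u + C0 := by rw [hAdef, hC0def]; linarith
  have hB1 : u - C0 ≤ B := by rw [hBdef, hC0def]; linarith
  have hB2 : B ≤ u + C0 := by rw [hBdef, hC0def]; linarith
  have hApos : 0 < A := by linarith
  have hBpos : 0 < B := by linarith
  have hA2u : A ≤ 2*u := by linarith
  have hBu2 : u/2 ≤ B := by linarith
  -- sigma values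
  have hTH : (0:ℝ) < T^H := Real.rpow_pos_of_pos hT H
  have hσ0 : sigmaMinus H μ u 0 T = T^H / A := by
    simp only [sigmaMinus]
    rw [Real.zero_rpow (show 2*H ≠ 0 by positivity), sub_zero, sub_zero, ← hT2def, hAdef]
  have hnum : (t-s)^H = T^H * y := by
    rw [hydef, ← Real.mul_rpow hT.le (show (0:ℝ) ≤ 1-x by linarith), ← hTx]
  have hσ1 : sigmaMinus H μ u s t = T^H * y / B := by
    simp only [sigmaMinus]
    rw [← ht2def, ← hs2def, hnum, hBdef]
  have hρ : sigmaMinus H μ u s t / sigmaMinus H μ u 0 T = y*A/B := by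
    rw [hσ1, hσ0]
    field_simp
  -- the denominator
  have hDden : H * (T - t) / T + H / T * s + s2 / (2*u) = H*x + s2/(2*u) := by
    rw [hxdef]; field_simp
  set D := H*x + s2/(2*u) with hDdef
  clear_value D
  have hD0 : 0 < D := by
    have h1 : 0 < H*x := mul_pos hH0 hx0
    have h2 : 0 ≤ s2/(2*u) := div_nonneg hs2a (by linarith)
    rw [hDdef]; linarith
  -- key identity
  have hid : B - y*A - D*B =
      (1 - y - H*x)*A + H*x*(A-B) - μ*T*x + (T2-t2)/2 + s2*(u-B)/(2*u) := by
    rw [hDdef, hAdef, hBdef, hTx]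
    field_simp [hupos.ne']
    ring
  -- term bounds
  have hHx1 : 0 ≤ H*x := (mul_pos hH0 hx0).le
  have hHx2 : H*x ≤ x := by
    have h := mul_le_mul_of_nonneg_right hH1.le hx0.le
    linarith
  have ht1b : 0 ≤ (1 - y - H*x)*A := mul_nonneg (by linarith) hApos.le
  have ht1c : (1 - y - H*x)*A ≤ 2*x^2*(2*u) :=
    mul_le_mul (by linarith) hA2u hApos.le (by positivity)
  have hAB1 : A - B ≤ 2*C0 := by linarith
  have hAB2 : -(2*C0) ≤ A - B := by linarith
  have hp2a : H*x*(A-B) ≤ 2*C0*x := by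
    have g1 := mul_le_mul_of_nonneg_left hAB1 hHx1
    have g2 := mul_le_mul_of_nonneg_right hHx2 hC0
    linarith
  have hp2b : -(2*C0*x) ≤ H*x*(A-B) := by
    have g3 := mul_le_mul_of_nonneg_left hAB2 hHx1
    have g2 := mul_le_mul_of_nonneg_right hHx2 hC0
    linarith
  have hmuTC : |μ| * T ≤ C0 := by rw [hC0def]; linarith
  have f1 : μ*T*x ≤ |μ| * T*x := mul_le_mul_of_nonneg_right habs1 hx0.le
  have f2 : (-(|μ| * T))*x ≤ μ*T*x := mul_le_mul_of_nonneg_right habs2 hx0.le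
  have f3 : |μ| * T*x ≤ C0*x := mul_le_mul_of_nonneg_right hmuTC hx0.le
  have f4 : T2*x ≤ C0*x := mul_le_mul_of_nonneg_right (by rw [hC0def]; linarith) hx0.le
  have f5a : s2*(u-B) ≤ s2*C0 := mul_le_mul_of_nonneg_left (by linarith) hs2a
  have f5b : s2*(-C0) ≤ s2*(u-B) := mul_le_mul_of_nonneg_left (by linarith) hs2a
  have h2u : (0:ℝ) < 2*u := by linarith
  have hp5a : s2*(u-B)/(2*u) ≤ s2*C0/(2*u) := div_le_div_of_nonneg_right f5a h2u.le
  have hp5b : s2*(-C0)/(2*u) ≤ s2*(u-B)/(2*u) := div_le_div_of_nonneg_right f5b h2u.le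
  have hp5c : s2*(-C0)/(2*u) = -(s2*C0/(2*u)) := by ring
  -- total bound on the difference
  have hdiff_ub : B - y*A - D*B ≤ 4*u*x^2 + 4*C0*x + s2*C0/(2*u) := by
    rw [hid]; linarith
  have hdiff_lb : -(4*u*x^2 + 4*C0*x + s2*C0/(2*u)) ≤ B - y*A - D*B := by
    rw [hid]; linarith
  -- comparison with ε * (D*B)
  have e6a : D*(u/2) ≤ D*B := mul_le_mul_of_nonneg_left hBu2 hD0.le
  have e6b : D*(u/2) = H*x*(u/2) + s2/4 := by
    rw [hDdef]; field_simp; ring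
  have e6 : H*x*(u/2) + s2/4 ≤ D*B := by linarith
  have e7 : 4*u*x^2 ≤ (ε/2)*(H*x*(u/2)) := by
    have g := mul_le_mul_of_nonneg_left hx16
      (show (0:ℝ) ≤ 4*u*x by positivity)
    linarith
  have e8 : 4*C0*x ≤ (ε/2)*(H*x*(u/2)) := by
    have g := mul_le_mul_of_nonneg_right hu3 hx0.le
    linarith
  have e9a : s2*C0 ≤ s2*(ε*u/2) := mul_le_mul_of_nonneg_left (by linarith) hs2a
  have e9b : s2*C0/(2*u) ≤ s2*(ε*u/2)/(2*u) := div_le_div_of_nonneg_right e9a h2u.le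
  have e9c : s2*(ε*u/2)/(2*u) = ε*(s2/4) := by field_simp; ring
  have e9 : s2*C0/(2*u) ≤ ε*(s2/4) := by rw [← e9c]; exact e9b
  have e10 : ε*(H*x*(u/2) + s2/4) ≤ ε*(D*B) := mul_le_mul_of_nonneg_left e6 hε.le
  have hbig : 4*u*x^2 + 4*C0*x + s2*C0/(2*u) ≤ ε*(D*B) := by
    linarith
  have hkey : |B - y*A - D*B| ≤ ε*(D*B) := abs_le.mpr ⟨by linarith, by linarith⟩
  -- conclude
  have hDBpos : 0 < D*B := mul_pos hD0 hBpos
  rw [hρ, hDden]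
  have hfin : (1 - y*A/B)/D - 1 = (B - y*A - D*B)/(D*B) := by
    field_simp
  rw [hfin, abs_div, abs_of_pos hDBpos]
  exact (div_le_iff₀ hDBpos).mpr (by linarith [hkey])
end

section
/- Let $H\in(0,1)$, $T>0$, and let $B_H$ be a fractional Brownian motion. For any family $\delta_u>0$ with $\delta_u\to 0$, $\sup\left|\frac{1-\mathrm{Corr}(B_H(t)-B_H(s),\,B_H(t')-B_H(s'))}{(|s-s'|^{2H}+|t-t'|^{2H})/(2T^{2H})}-1\right|\to 0$ as $u\to\infty$, where the supremum is over distinct pairs $(s,t),(s',t')\in[0,\delta_u]\times[T-\delta_u,T]$. -/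
open MeasureTheory Filter Set

lemma rpow_lip {r c d K : ℝ} (hc : 0 < c)
    (hK : ∀ z ∈ Icc c d, |r * z ^ (r - 1)| ≤ K)
    {x y : ℝ} (hx : x ∈ Icc c d) (hy : y ∈ Icc c d) :
    |y ^ r - x ^ r| ≤ K * |y - x| := by
  have hder : ∀ z ∈ Icc c d,
      HasDerivWithinAt (fun w : ℝ => w ^ r) (r * z ^ (r - 1)) (Icc c d) z := fun z hz =>
    (Real.hasDerivAt_rpow_const (Or.inl (ne_of_gt (lt_of_lt_of_le hc hz.1)))).hasDerivWithinAt
  have := Convex.norm_image_sub_le_of_norm_hasDerivWithin_le hder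
    (fun z hz => by rw [Real.norm_eq_abs]; exact hK z hz) (convex_Icc c d) hx hy
  simpa [Real.norm_eq_abs] using this

lemma rpow_le_max {c d e : ℝ} (hc : 0 < c) {z : ℝ} (hz : z ∈ Icc c d) :
    z ^ e ≤ max (c ^ e) (d ^ e) := by
  rcases le_or_gt 0 e with he | he
  · exact le_max_of_le_right (Real.rpow_le_rpow (le_trans hc.le hz.1) hz.2 he)
  · exact le_max_of_le_left (Real.rpow_le_rpow_of_nonpos hc hz.1 he.le)

lemma rpow_taylor {r c d M : ℝ} (hc : 0 < c)
    (hM : ∀ z ∈ Icc c d, |(r - 1) * z ^ (r - 2)| ≤ M)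
    {x y : ℝ} (hx : x ∈ Icc c d) (hy : y ∈ Icc c d) :
    |y ^ r - x ^ r - r * x ^ (r - 1) * (y - x)| ≤ |r| * M * (y - x) ^ 2 := by
  have hM0 : 0 ≤ M := le_trans (abs_nonneg _) (hM x hx)
  have hsub : uIcc x y ⊆ Icc c d := uIcc_subset_Icc hx hy
  have hlip : ∀ z ∈ uIcc x y, |z ^ (r-1) - x ^ (r-1)| ≤ M * |z - x| := by
    intro z hz
    have : ∀ w ∈ Icc c d, |(r - 1) * w ^ ((r-1) - 1)| ≤ M := by
      intro w hw
      have : (r - 1) - 1 = r - 2 := by ring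
      rw [this]; exact hM w hw
    exact rpow_lip hc this hx (hsub hz)
  set g : ℝ → ℝ := fun w => w ^ r - r * x ^ (r - 1) * w with hg
  have hder : ∀ z ∈ uIcc x y,
      HasDerivWithinAt g (r * z ^ (r - 1) - r * x ^ (r - 1)) (uIcc x y) z := by
    intro z hz
    have h1 : HasDerivWithinAt (fun w : ℝ => w ^ r) (r * z ^ (r - 1)) (uIcc x y) z :=
      (Real.hasDerivAt_rpow_const
        (Or.inl (ne_of_gt (lt_of_lt_of_le hc (hsub hz).1)))).hasDerivWithinAt
    have h2 := h1.sub ((hasDerivWithinAt_id z (uIcc x y)).const_mul (r * x ^ (r - 1))); rw [mul_one] at h2; exact h2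
  have hbound : ∀ z ∈ uIcc x y,
      ‖r * z ^ (r - 1) - r * x ^ (r - 1)‖ ≤ |r| * M * |y - x| := by
    intro z hz
    have h1 : |r * z ^ (r - 1) - r * x ^ (r - 1)| = |r| * |z ^ (r-1) - x ^ (r-1)| := by
      rw [← abs_mul]; ring_nf
    have h2 : |z - x| ≤ |y - x| := by
      rcases hz with ⟨h3, h4⟩
      rw [abs_sub_le_iff]
      constructor
      · calc z - x ≤ (x ⊔ y) - (x ⊓ y) := by
              have := inf_le_left (a := x) (b := y); gcongr
            _ = |y - x| := max_sub_min_eq_abs x y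
      · calc x - z ≤ (x ⊔ y) - (x ⊓ y) := by
              have := le_sup_left (a := x) (b := y); gcongr
            _ = |y - x| := max_sub_min_eq_abs x y
    rw [Real.norm_eq_abs, h1]
    calc |r| * |z ^ (r-1) - x ^ (r-1)| ≤ |r| * (M * |z - x|) := by
          gcongr; exact hlip z hz
      _ ≤ |r| * (M * |y - x|) := by gcongr
      _ = |r| * M * |y - x| := by ring
  have := Convex.norm_image_sub_le_of_norm_hasDerivWithin_le hder hbound
    (convex_uIcc x y) left_mem_uIcc right_mem_uIcc
  have h3 : g y - g x = y ^ r - x ^ r - r * x ^ (r - 1) * (y - x) := by simp [hg]; ring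
  rw [Real.norm_eq_abs, Real.norm_eq_abs, h3] at this
  calc |y ^ r - x ^ r - r * x ^ (r - 1) * (y - x)| ≤ |r| * M * |y - x| * |y - x| := this
    _ = |r| * M * (y - x) ^ 2 := by rw [mul_assoc, ← abs_mul, ← sq, abs_sq]

noncomputable def K1c (H T : ℝ) : ℝ := |2*H| * max ((T/2) ^ (2*H - 1)) (T ^ (2*H - 1))
noncomputable def M1c (H T : ℝ) : ℝ := |2*H - 1| * max ((T/2) ^ (2*H - 2)) (T ^ (2*H - 2))
noncomputable def M2c (H T : ℝ) : ℝ := |H - 1| * max ((T^2/4) ^ (H - 2)) ((T^2) ^ (H - 2))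
noncomputable def Cc (H T : ℝ) : ℝ := |2*H| * M1c H T + 2*|H| * M2c H T * T^2
noncomputable def etac (H T ε : ℝ) : ℝ :=
  min (T/8) (min (ε * (T/2)^(2*H) / (4*(K1c H T + 1)))
    ((ε/(16*(Cc H T + 1))) ^ ((1:ℝ)/(2 - 2*H))))

lemma K1c_nonneg {H T : ℝ} (hT : 0 < T) : 0 ≤ K1c H T :=
  mul_nonneg (abs_nonneg _)
    (le_trans (Real.rpow_pos_of_pos (by linarith) _).le (le_max_left _ _))

lemma M1c_nonneg {H T : ℝ} (hT : 0 < T) : 0 ≤ M1c H T :=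
  mul_nonneg (abs_nonneg _)
    (le_trans (Real.rpow_pos_of_pos (by linarith) _).le (le_max_left _ _))

lemma M2c_nonneg {H T : ℝ} (hT : 0 < T) : 0 ≤ M2c H T :=
  mul_nonneg (abs_nonneg _)
    (le_trans (Real.rpow_pos_of_pos (by positivity) _).le (le_max_left _ _))

lemma Cc_nonneg {H T : ℝ} (hT : 0 < T) : 0 ≤ Cc H T :=
  add_nonneg (mul_nonneg (abs_nonneg _) (M1c_nonneg hT))
    (mul_nonneg (mul_nonneg (by positivity) (M2c_nonneg hT)) (sq_nonneg T))

lemma etac_pos {H T ε : ℝ} (hH1 : H < 1) (hT : 0 < T) (hε : 0 < ε) :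
    0 < etac H T ε := by
  refine lt_min (by linarith) (lt_min ?_ ?_)
  · exact div_pos (mul_pos hε (Real.rpow_pos_of_pos (by linarith) _))
      (by linarith [K1c_nonneg (H := H) hT])
  · exact Real.rpow_pos_of_pos (div_pos hε (by linarith [Cc_nonneg (H := H) hT])) _

lemma sq_le_rpow_mul {p d H : ℝ} (hH0 : 0 < H) (hH1 : H < 1) (hpd : |p| ≤ d) :
    p^2 ≤ d^(2-2*H) * |p|^(2*H) := by
  rcases eq_or_ne p 0 with rfl | hp
  · simp [Real.zero_rpow (show 2*H ≠ 0 by positivity)]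
  · have hp0 : 0 < |p| := abs_pos.mpr hp
    have h1 : p^2 = |p|^(2-2*H) * |p|^(2*H) := by
      rw [← Real.rpow_add hp0, show (2-2*H) + 2*H = (2:ℝ) by ring,
        show ((2:ℝ)) = ((2:ℕ):ℝ) by norm_num, Real.rpow_natCast, sq_abs]
    rw [h1]
    exact mul_le_mul_of_nonneg_right
      (Real.rpow_le_rpow (abs_nonneg p) hpd (by linarith))
      (Real.rpow_nonneg (abs_nonneg p) _)

set_option maxHeartbeats 2000000 in
lemma main_est (H T ε : ℝ) (hH0 : 0 < H) (hH1 : H < 1) (hT : 0 < T) (hε : 0 < ε)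
    (a b p q d : ℝ) (hd : 0 < d) (hdη : d < etac H T ε)
    (hp : |p| ≤ d) (hq : |q| ≤ d)
    (ha1 : T - 2*d ≤ a) (ha2 : a ≤ T)
    (hb1 : T - 2*d ≤ b) (hb2 : b ≤ T)
    (hap1 : T - 2*d ≤ a - p) (hap2 : a - p ≤ T)
    (haq1 : T - 2*d ≤ a + q) (haq2 : a + q ≤ T)
    (hba : b - a = q - p)
    (hpq : p ≠ 0 ∨ q ≠ 0) :
    |(1 - (((a-p)^(2*H) + (a+q)^(2*H) - |q|^(2*H) - |p|^(2*H))/2) / (a^H * b^H)) /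
        ((|p|^(2*H) + |q|^(2*H)) / (2 * T^(2*H))) - 1| ≤ ε := by
  have hT2 : (0:ℝ) < T/2 := by linarith
  have hη0 : 0 < etac H T ε := etac_pos hH1 hT hε
  have hK10 : 0 ≤ K1c H T := K1c_nonneg hT
  have hM10 : 0 ≤ M1c H T := M1c_nonneg hT
  have hM20 : 0 ≤ M2c H T := M2c_nonneg hT
  have hC0 : 0 ≤ Cc H T := Cc_nonneg hT
  have hη1 : etac H T ε ≤ T/8 := min_le_left _ _
  have hη2 : etac H T ε ≤ ε * (T/2)^(2*H) / (4*(K1c H T + 1)) :=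
    le_trans (min_le_right _ _) (min_le_left _ _)
  have hη3 : etac H T ε ≤ (ε/(16*(Cc H T + 1))) ^ ((1:ℝ)/(2 - 2*H)) :=
    le_trans (min_le_right _ _) (min_le_right _ _)
  have hd8 : d < T/8 := lt_of_lt_of_le hdη hη1
  have haI : a ∈ Icc (T/2) T := ⟨by linarith, ha2⟩
  have hbI : b ∈ Icc (T/2) T := ⟨by linarith, hb2⟩
  have hapI : a - p ∈ Icc (T/2) T := ⟨by linarith, hap2⟩
  have haqI : a + q ∈ Icc (T/2) T := ⟨by linarith, haq2⟩
  have hA0 : 0 < a := by linarith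
  have hB0 : 0 < b := by linarith
  -- derivative bounds
  have hM1b : ∀ z ∈ Icc (T/2) T, |(2*H - 1) * z ^ (2*H - 2)| ≤ M1c H T := by
    intro z hz
    rw [M1c, abs_mul, abs_of_pos (Real.rpow_pos_of_pos (lt_of_lt_of_le hT2 hz.1) _)]
    exact mul_le_mul_of_nonneg_left (rpow_le_max hT2 hz) (abs_nonneg _)
  have hK1b : ∀ z ∈ Icc (T/2) T, |2*H * z ^ (2*H - 1)| ≤ K1c H T := by
    intro z hz
    rw [K1c, abs_mul, abs_of_pos (Real.rpow_pos_of_pos (lt_of_lt_of_le hT2 hz.1) _)]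
    exact mul_le_mul_of_nonneg_left (rpow_le_max hT2 hz) (abs_nonneg _)
  have hT4 : (0:ℝ) < T^2/4 := by positivity
  have hM2b : ∀ z ∈ Icc (T^2/4) (T^2), |(H - 1) * z ^ (H - 2)| ≤ M2c H T := by
    intro z hz
    rw [M2c, abs_mul, abs_of_pos (Real.rpow_pos_of_pos (lt_of_lt_of_le hT4 hz.1) _)]
    exact mul_le_mul_of_nonneg_left (rpow_le_max hT4 hz) (abs_nonneg _)
  -- Taylor estimates
  have he1 : |(a-p)^(2*H) - a^(2*H) - 2*H*a^(2*H-1)*(a - p - a)|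
      ≤ |2*H| * M1c H T * (a - p - a)^2 := rpow_taylor hT2 hM1b haI hapI
  have he2 : |(a+q)^(2*H) - a^(2*H) - 2*H*a^(2*H-1)*(a + q - a)|
      ≤ |2*H| * M1c H T * (a + q - a)^2 := rpow_taylor hT2 hM1b haI haqI
  have ha2I : a^2 ∈ Icc (T^2/4) (T^2) :=
    ⟨by nlinarith [haI.1, haI.2], by nlinarith [haI.1, haI.2, hA0]⟩
  have habI : a*b ∈ Icc (T^2/4) (T^2) :=
    ⟨by nlinarith [haI.1, hbI.1], by nlinarith [haI.2, hbI.2, hA0, hB0]⟩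
  have he3 : |(a*b)^H - (a^2)^H - H*(a^2)^(H-1)*(a*b - a^2)|
      ≤ |H| * M2c H T * (a*b - a^2)^2 := rpow_taylor hT4 hM2b ha2I habI
  -- conversions
  have c1 : (a^2) ^ H = a ^ (2*H) := by
    rw [← Real.rpow_natCast a 2, ← Real.rpow_mul hA0.le]
    norm_num
  have c2 : ((a^2)^(H-1)) * a = a ^ (2*H-1) := by
    rw [← Real.rpow_natCast a 2, ← Real.rpow_mul hA0.le,
      ← Real.rpow_add_one (ne_of_gt hA0)]
    congr 1; push_cast; ring
  have key : a^H*b^H - ((a-p)^(2*H) + (a+q)^(2*H))/2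
      = ((a*b)^H - (a^2)^H - H*(a^2)^(H-1)*(a*b - a^2))
        - (((a-p)^(2*H) - a^(2*H) - 2*H*a^(2*H-1)*(a - p - a))
          + ((a+q)^(2*H) - a^(2*H) - 2*H*a^(2*H-1)*(a + q - a)))/2 := by
    rw [← Real.mul_rpow hA0.le hB0.le, ← c1, ← c2,
      show b = a + (q - p) by linarith]
    ring
  have habq : (a*b - a^2)^2 ≤ T^2 * (2*(p^2+q^2)) := by
    have h1 : a*b - a^2 = a*(q-p) := by nlinarith [hba]
    have k2 : a^2 ≤ T^2 := by nlinarith [hA0.le, ha2]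
    have k3 : (q-p)^2 ≤ 2*(p^2+q^2) := by nlinarith [sq_nonneg (p+q)]
    calc (a*b - a^2)^2 = a^2*(q-p)^2 := by rw [h1]; ring
      _ ≤ T^2*(q-p)^2 := mul_le_mul_of_nonneg_right k2 (sq_nonneg _)
      _ ≤ T^2*(2*(p^2+q^2)) := mul_le_mul_of_nonneg_left k3 (sq_nonneg T)
  have hEb : |a^H*b^H - ((a-p)^(2*H) + (a+q)^(2*H))/2| ≤ Cc H T * (p^2 + q^2) := by
    obtain ⟨l1, r1⟩ := abs_le.mp he1
    obtain ⟨l2, r2⟩ := abs_le.mp he2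
    obtain ⟨l3, r3⟩ := abs_le.mp he3
    have f3 : |H| * M2c H T * (a*b - a^2)^2 ≤ |H| * M2c H T * (T^2*(2*(p^2+q^2))) :=
      mul_le_mul_of_nonneg_left habq (mul_nonneg (abs_nonneg _) hM20)
    have hA2 : 0 ≤ |2*H| * M1c H T * (p^2+q^2) := by positivity
    rw [key, abs_le, show Cc H T = |2*H| * M1c H T + 2*|H| * M2c H T * T^2 from rfl]
    have e1sq : (a - p - a)^2 = p^2 := by ring
    have e2sq : (a + q - a)^2 = q^2 := by ring
    rw [e1sq] at r1 l1
    rw [e2sq] at r2 l2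
    constructor <;> linarith only [f3, hA2, l1, r1, l2, r2, l3, r3]
  -- setup for the final computation
  have hS0 : 0 < |p|^(2*H) + |q|^(2*H) := by
    rcases hpq with h | h
    · have h1 : 0 < |p|^(2*H) := Real.rpow_pos_of_pos (abs_pos.mpr h) _
      have h2 : 0 ≤ |q|^(2*H) := Real.rpow_nonneg (abs_nonneg _) _
      linarith
    · have h1 : 0 < |q|^(2*H) := Real.rpow_pos_of_pos (abs_pos.mpr h) _
      have h2 : 0 ≤ |p|^(2*H) := Real.rpow_nonneg (abs_nonneg _) _
      linarith
  have hP0 : 0 < a^H*b^H :=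
    mul_pos (Real.rpow_pos_of_pos hA0 _) (Real.rpow_pos_of_pos hB0 _)
  have hTr0 : 0 < T^(2*H) := Real.rpow_pos_of_pos hT _
  have hTr2 : 0 < (T/2)^(2*H) := Real.rpow_pos_of_pos hT2 _
  set S := |p|^(2*H) + |q|^(2*H) with hSdef
  have key2 : (1 - (((a-p)^(2*H) + (a+q)^(2*H) - |q|^(2*H) - |p|^(2*H))/2) / (a^H * b^H)) /
        (S / (2 * T^(2*H))) - 1
      = (T^(2*H) - a^H*b^H)/(a^H*b^H)
        + (2*T^(2*H)*(a^H*b^H - ((a-p)^(2*H)+(a+q)^(2*H))/2))/((a^H*b^H)*S) := by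
    field_simp
    ring
  rw [key2]
  -- bound 1
  have hTT : T^H*T^H = T^(2*H) := by rw [← Real.rpow_add hT]; congr 1; ring
  have hPle : a^H*b^H ≤ T^(2*H) := by
    rw [← hTT]
    exact mul_le_mul (Real.rpow_le_rpow hA0.le ha2 hH0.le)
      (Real.rpow_le_rpow hB0.le hb2 hH0.le) (Real.rpow_nonneg hB0.le _)
      (Real.rpow_nonneg (by linarith) _)
  have hTd2 : (0:ℝ) < T - 2*d := by linarith
  have hTdd : (T - 2*d)^H * (T - 2*d)^H = (T - 2*d)^(2*H) := by
    rw [← Real.rpow_add hTd2]; congr 1; ring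
  have hPge : (T - 2*d)^(2*H) ≤ a^H*b^H := by
    rw [← hTdd]
    exact mul_le_mul (Real.rpow_le_rpow hTd2.le ha1 hH0.le)
      (Real.rpow_le_rpow hTd2.le hb1 hH0.le) (Real.rpow_nonneg hTd2.le _)
      (Real.rpow_nonneg hA0.le _)
  have hPge2 : (T/2)^(2*H) ≤ a^H*b^H :=
    le_trans (Real.rpow_le_rpow hT2.le (by linarith) (by positivity)) hPge
  have hTdI : T - 2*d ∈ Icc (T/2) T := ⟨by linarith, by linarith⟩
  have hTI : T ∈ Icc (T/2) T := ⟨by linarith, le_refl T⟩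
  have hlip : |T^(2*H) - (T - 2*d)^(2*H)| ≤ K1c H T * |T - (T - 2*d)| :=
    rpow_lip hT2 hK1b hTdI hTI
  have hnum : T^(2*H) - a^H*b^H ≤ K1c H T * (2*d) := by
    have h1 : |T - (T - 2*d)| = 2*d := by rw [abs_of_nonneg (by linarith)]; ring
    rw [h1] at hlip
    have := abs_le.mp hlip
    linarith only [this.2, hPge]
  have h1 : etac H T ε * (4*(K1c H T+1)) ≤ ε * (T/2)^(2*H) :=
    (le_div_iff₀ (by linarith)).mp hη2
  have h2 : K1c H T * (2*d) ≤ ε/2 * (T/2)^(2*H) := by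
    linarith only [mul_le_mul_of_nonneg_left hdη.le hK10, hη0.le, h1]
  have bound1 : (T^(2*H) - a^H*b^H)/(a^H*b^H) ≤ ε/2 := by
    rw [div_le_iff₀ hP0]
    linarith only [hnum, h2, mul_le_mul_of_nonneg_left hPge2 (show (0:ℝ) ≤ ε/2 by linarith only [hε.le])]
  have bound1' : 0 ≤ (T^(2*H) - a^H*b^H)/(a^H*b^H) :=
    div_nonneg (by linarith only [hPle]) hP0.le
  -- bound 2
  have hexp : (0:ℝ) < 2 - 2*H := by linarith
  have hCc1 : (0:ℝ) < 16*(Cc H T + 1) := by linarith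
  have hη4 : etac H T ε ^(2-2*H) ≤ ε/(16*(Cc H T+1)) := by
    calc etac H T ε ^(2-2*H)
        ≤ ((ε/(16*(Cc H T+1)))^((1:ℝ)/(2-2*H)))^(2-2*H) :=
          Real.rpow_le_rpow hη0.le hη3 hexp.le
      _ = ε/(16*(Cc H T+1)) := by
          rw [← Real.rpow_mul (le_of_lt (div_pos hε hCc1)), one_div,
            inv_mul_cancel₀ hexp.ne', Real.rpow_one]
  have hpq2 : p^2 + q^2 ≤ etac H T ε ^(2-2*H) * S := by
    have h1 := sq_le_rpow_mul hH0 hH1 (le_trans hp hdη.le : |p| ≤ etac H T ε)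
    have h2 := sq_le_rpow_mul hH0 hH1 (le_trans hq hdη.le : |q| ≤ etac H T ε)
    rw [hSdef]; linarith only [h1, h2]
  have hEb2 : |a^H*b^H - ((a-p)^(2*H) + (a+q)^(2*H))/2|
      ≤ Cc H T * (etac H T ε ^(2-2*H) * S) :=
    hEb.trans (mul_le_mul_of_nonneg_left hpq2 hC0)
  have h4 : T^(2*H) ≤ 4 * (T/2)^(2*H) := by
    have hX : (T/2)^(2*H) * 2^(2*H) = T^(2*H) := by
      rw [← Real.mul_rpow (by positivity) (by norm_num)]
      norm_num
    have h2r : (2:ℝ)^(2*H) ≤ 4 := by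
      calc (2:ℝ)^(2*H) ≤ 2^(2:ℝ) :=
            Real.rpow_le_rpow_of_exponent_le one_le_two (by linarith)
        _ = 4 := by
            rw [show ((2:ℝ)) = ((2:ℕ):ℝ) by norm_num, Real.rpow_natCast]; norm_num
    linarith only [mul_le_mul_of_nonneg_left h2r hTr2.le, hX]
  have h5 : Cc H T * etac H T ε ^(2-2*H) ≤ ε/16 := by
    have h6 := mul_le_mul_of_nonneg_left hη4 hC0
    have h7 : Cc H T * (ε/(16*(Cc H T+1))) ≤ ε/16 := by
      rw [mul_div_assoc', div_le_div_iff₀ hCc1 (by norm_num : (0:ℝ) < 16)]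
      linarith only [hε.le]
    linarith only [h6, h7]
  have bound2 : |2*T^(2*H)*(a^H*b^H - ((a-p)^(2*H)+(a+q)^(2*H))/2)/((a^H*b^H)*S)| ≤ ε/2 := by
    have habs : |2*T^(2*H)*(a^H*b^H - ((a-p)^(2*H)+(a+q)^(2*H))/2)/((a^H*b^H)*S)|
        = 2*T^(2*H)*|a^H*b^H - ((a-p)^(2*H)+(a+q)^(2*H))/2|/((a^H*b^H)*S) := by
      rw [abs_div, abs_mul, abs_mul, abs_of_pos hTr0,
        abs_of_pos (mul_pos hP0 hS0), abs_two]
    rw [habs, div_le_iff₀ (mul_pos hP0 hS0)]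
    calc 2*T^(2*H)*|a^H*b^H - ((a-p)^(2*H)+(a+q)^(2*H))/2|
        ≤ 2*(4*(T/2)^(2*H))*(Cc H T*(etac H T ε ^(2-2*H)*S)) := by
          exact mul_le_mul (by linarith only [h4]) hEb2 (abs_nonneg _) (by positivity)
      _ = 8*(T/2)^(2*H)*((Cc H T*etac H T ε ^(2-2*H))*S) := by ring
      _ ≤ 8*(T/2)^(2*H)*((ε/16)*S) := by
          apply mul_le_mul_of_nonneg_left _ (by positivity)
          exact mul_le_mul_of_nonneg_right h5 hS0.le
      _ = ε/2*((T/2)^(2*H)*S) := by ring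
      _ ≤ ε/2*((a^H*b^H)*S) := by
          apply mul_le_mul_of_nonneg_left _ (by linarith only [hε.le])
          exact mul_le_mul_of_nonneg_right hPge2 hS0.le
  calc |(T^(2*H) - a^H*b^H)/(a^H*b^H)
        + (2*T^(2*H)*(a^H*b^H - ((a-p)^(2*H)+(a+q)^(2*H))/2))/((a^H*b^H)*S)|
      ≤ |(T^(2*H) - a^H*b^H)/(a^H*b^H)|
        + |(2*T^(2*H)*(a^H*b^H - ((a-p)^(2*H)+(a+q)^(2*H))/2))/((a^H*b^H)*S)| :=
        abs_add_le _ _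
    _ ≤ ε/2 + ε/2 := by
        rw [abs_of_nonneg bound1']
        exact add_le_add bound1 bound2
    _ = ε := by ring

set_option maxHeartbeats 1000000 in
theorem fbm_increment_correlation_asymptotics
    {Ω : Type*} [MeasurableSpace Ω] (μ : Measure Ω) [IsProbabilityMeasure μ]
    (H T : ℝ) (hH : H ∈ Set.Ioo (0:ℝ) 1) (hT : 0 < T)
    (B : ℝ → Ω → ℝ)
    (hL2 : ∀ t : ℝ, 0 ≤ t → MemLp (B t) 2 μ)
    (hmean : ∀ t : ℝ, 0 ≤ t → ∫ ω, B t ω ∂μ = 0)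
    (hcov : ∀ s t : ℝ, 0 ≤ s → 0 ≤ t →
      ∫ ω, B s ω * B t ω ∂μ = (|s| ^ (2*H) + |t| ^ (2*H) - |t - s| ^ (2*H)) / 2)
    (δ : ℝ → ℝ) (hδpos : ∀ u, 0 < δ u) (hδT : ∀ u, δ u < T/2)
    (hδ : Tendsto δ atTop (nhds 0)) :
    ∀ ε : ℝ, 0 < ε → ∃ u0 : ℝ, ∀ u : ℝ, u0 ≤ u →
      ∀ s t s' t' : ℝ,
        0 ≤ s → s ≤ δ u → T - δ u ≤ t → t ≤ T →
        0 ≤ s' → s' ≤ δ u → T - δ u ≤ t' → t' ≤ T →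
        (s, t) ≠ (s', t') →
        |(1 - (∫ ω, (B t ω - B s ω) * (B t' ω - B s' ω) ∂μ) /
              Real.sqrt ((∫ ω, (B t ω - B s ω) ^ 2 ∂μ) * (∫ ω, (B t' ω - B s' ω) ^ 2 ∂μ))) /
            ((|s - s'| ^ (2*H) + |t - t'| ^ (2*H)) / (2 * T ^ (2*H))) - 1| ≤ ε := by
  obtain ⟨hH0, hH1⟩ := hH
  have hInt : ∀ x y : ℝ, 0 ≤ x → 0 ≤ y → Integrable (fun ω => B x ω * B y ω) μ := by
    intro x y hx hy
    have h := (hL2 y hy).smul (μ := μ) (r := 1) (hL2 x hx)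
    rw [memLp_one_iff_integrable] at h
    exact h.congr (Eventually.of_forall (fun ω => by simp [smul_eq_mul]))
  have covgen : ∀ x y x' y' : ℝ, 0 ≤ x → 0 ≤ y → 0 ≤ x' → 0 ≤ y' →
      ∫ ω, (B y ω - B x ω) * (B y' ω - B x' ω) ∂μ
        = (|y - x'| ^ (2*H) + |y' - x| ^ (2*H) - |y' - y| ^ (2*H) - |x' - x| ^ (2*H)) / 2 := by
    intro x y x' y' hx hy hx' hy'
    have hfun : (fun ω => (B y ω - B x ω) * (B y' ω - B x' ω))
        = fun ω => (B y ω * B y' ω - B y ω * B x' ω)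
          - (B x ω * B y' ω - B x ω * B x' ω) := by
      funext ω; ring
    rw [hfun, integral_sub
        (show Integrable (fun ω => B y ω * B y' ω - B y ω * B x' ω) μ from
          (hInt y y' hy hy').sub (hInt y x' hy hx'))
        (show Integrable (fun ω => B x ω * B y' ω - B x ω * B x' ω) μ from
          (hInt x y' hx hy').sub (hInt x x' hx hx')),
      integral_sub (hInt y y' hy hy') (hInt y x' hy hx'),
      integral_sub (hInt x y' hx hy') (hInt x x' hx hx'),
      hcov y y' hy hy', hcov y x' hy hx', hcov x y' hx hy', hcov x x' hx hx',
      abs_sub_comm x' y]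
    ring
  have hvar : ∀ x y : ℝ, 0 ≤ x → 0 ≤ y →
      ∫ ω, (B y ω - B x ω) ^ 2 ∂μ = |y - x| ^ (2*H) := by
    intro x y hx hy
    have hfun : (fun ω => (B y ω - B x ω) ^ 2)
        = fun ω => (B y ω - B x ω) * (B y ω - B x ω) := by
      funext ω; ring
    rw [hfun, covgen x y x y hx hy hx hy]
    simp only [sub_self, abs_zero, Real.zero_rpow (show 2*H ≠ 0 by positivity)]
    ring
  intro ε hε
  have hη0 : 0 < etac H T ε := etac_pos hH1 hT hε
  obtain ⟨u0, hu0⟩ := eventually_atTop.mp (hδ.eventually (eventually_lt_nhds hη0))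
  refine ⟨u0, ?_⟩
  intro u hu s t s' t' hs0 hsδ htT ht hs'0 hs'δ ht'T ht' hne
  have hdη : δ u < etac H T ε := hu0 u hu
  have hd0 : 0 < δ u := hδpos u
  have hd8 : δ u < T/8 := lt_of_lt_of_le hdη (min_le_left _ _)
  have ht0 : (0:ℝ) ≤ t := by linarith
  have ht'0 : (0:ℝ) ≤ t' := by linarith
  rw [hvar s t hs0 ht0, hvar s' t' hs'0 ht'0, covgen s t s' t' hs0 ht0 hs'0 ht'0,
    abs_of_nonneg (show (0:ℝ) ≤ t - s by linarith),
    abs_of_nonneg (show (0:ℝ) ≤ t' - s' by linarith),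
    abs_of_nonneg (show (0:ℝ) ≤ t - s' by linarith),
    abs_of_nonneg (show (0:ℝ) ≤ t' - s by linarith)]
  have hA0 : (0:ℝ) < t - s := by linarith
  have hB0 : (0:ℝ) < t' - s' := by linarith
  have hsqrt : Real.sqrt ((t-s)^(2*H) * (t'-s')^(2*H)) = (t-s)^H * (t'-s')^H := by
    have h1 : (t-s)^(2*H) = ((t-s)^H)^2 := by
      rw [sq, ← Real.rpow_add hA0]; congr 1; ring
    have h2 : (t'-s')^(2*H) = ((t'-s')^H)^2 := by
      rw [sq, ← Real.rpow_add hB0]; congr 1; ring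
    rw [h1, h2, ← mul_pow, Real.sqrt_sq (by positivity)]
  rw [hsqrt, abs_sub_comm s s', abs_sub_comm t t',
    show t - s' = (t - s) - (s' - s) by ring,
    show t' - s = (t - s) + (t' - t) by ring]
  have hpq : s' - s ≠ 0 ∨ t' - t ≠ 0 := by
    by_contra h
    push_neg at h
    exact hne (Prod.ext (by linarith [h.1]) (by linarith [h.2]))
  exact main_est H T ε hH0 hH1 hT hε (t-s) (t'-s') (s'-s) (t'-t) (δ u) hd0 hdη
    (abs_le.mpr ⟨by linarith, by linarith⟩) (abs_le.mpr ⟨by linarith, by linarith⟩)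
    (by linarith) (by linarith) (by linarith) (by linarith)
    (by linarith) (by linarith) (by linarith) (by linarith)
    (by ring) hpq
end

section
/- Let $Q(s)=\sup_{t\ge s}\big(\widetilde B_H(t)-\widetilde B_H(s)-c(t-s)\big)$ for a fractional Brownian motion $\widetilde B_H$ and constant $c>0$, and suppose $\limsup_{s\to\infty}Q(s)/(\log s)^{1/(2(1-H))}=C>0$ almost surely. Then for the drifted process $X_t=B_H(t)-\frac{1}{2}t^{2H}+\mu t$ with $\widetilde B_H=-B_H$ and $c=|\mu|+1$, the all-time maximum drawdown satisfies $\sup_{0\le t<\infty}(\overline X_t - X_t)=\infty$ almost surely, where $\overline X_t=\sup_{0\le s\le t}X_s$. -/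
open MeasureTheory Filter

theorem drawdown_infinite_time_infinite
    {Ω : Type*} [MeasurableSpace Ω] (P : Measure Ω) [IsProbabilityMeasure P]
    (H μ : ℝ) (hH : H ∈ Set.Ioo (0:ℝ) 1)
    (B : ℝ → Ω → ℝ)
    (X : ℝ → Ω → ℝ)
    (hX : ∀ t ω, X t ω = B t ω - t ^ (2*H) / 2 + μ * t)
    (Q : ℝ → Ω → ℝ)
    (hQ : ∀ s ω, Q s ω =
      sSup {x : ℝ | ∃ t : ℝ, s ≤ t ∧ x = (-(B t ω)) - (-(B s ω)) - (|μ| + 1) * (t - s)})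
    (C : ℝ) (hC : 0 < C)
    (hlimsup : ∀ᵐ ω ∂P,
      Filter.limsup (fun s => Q s ω / (Real.log s) ^ (1/(2*(1 - H)))) atTop = C) :
    ∀ᵐ ω ∂P,
      ¬ BddAbove {x : ℝ | ∃ s t : ℝ, 0 ≤ s ∧ s ≤ t ∧ x = X s ω - X t ω} := by
  filter_upwards [hlimsup] with ω hω hB
  obtain ⟨M, hM⟩ := hB
  set p : ℝ := 1/(2*(1 - H)) with hp_def
  have hHp : 0 < 1 - H := by linarith [hH.2]
  have hp : 0 < p := by positivity
  have key : ∀ s : ℝ, 0 ≤ s → 0 ≤ Q s ω ∧ Q s ω ≤ M := by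
    intro s hs
    have hmem0 : (0:ℝ) ∈ {x : ℝ | ∃ t : ℝ, s ≤ t ∧
        x = (-(B t ω)) - (-(B s ω)) - (|μ| + 1) * (t - s)} :=
      ⟨s, le_refl s, by ring⟩
    have hub : ∀ x ∈ {x : ℝ | ∃ t : ℝ, s ≤ t ∧
        x = (-(B t ω)) - (-(B s ω)) - (|μ| + 1) * (t - s)}, x ≤ M := by
      rintro x ⟨t, hst, rfl⟩
      have hD : X s ω - X t ω ≤ M := hM ⟨s, t, hs, hst, rfl⟩
      have hpow : s ^ (2*H) ≤ t ^ (2*H) :=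
        Real.rpow_le_rpow hs hst (by linarith [hH.1])
      have habs : μ ≤ |μ| := le_abs_self μ
      rw [hX s ω, hX t ω] at hD
      nlinarith [mul_nonneg (sub_nonneg.2 habs) (sub_nonneg.2 hst)]
    constructor
    · rw [hQ]; exact le_csSup ⟨M, hub⟩ hmem0
    · rw [hQ]; exact csSup_le ⟨0, hmem0⟩ hub
  have htend : Tendsto (fun s => Q s ω / (Real.log s) ^ p) atTop (nhds 0) := by
    apply squeeze_zero' (g := fun s => M / (Real.log s) ^ p)
    · filter_upwards [eventually_ge_atTop (3:ℝ)] with s hs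
      have hs0 : (0:ℝ) ≤ s := by linarith
      exact div_nonneg (key s hs0).1 (Real.rpow_nonneg (Real.log_nonneg (by linarith)) p)
    · filter_upwards [eventually_ge_atTop (3:ℝ)] with s hs
      have hs0 : (0:ℝ) ≤ s := by linarith
      have hlog : 0 < Real.log s := Real.log_pos (by linarith)
      have hd : 0 < (Real.log s) ^ p := Real.rpow_pos_of_pos hlog p
      gcongr
      exact (key s hs0).2
    · exact Tendsto.div_atTop tendsto_const_nhds
        ((tendsto_rpow_atTop hp).comp Real.tendsto_log_atTop)
  have h0 : Filter.limsup (fun s => Q s ω / (Real.log s) ^ p) atTop = 0 :=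
    htend.limsup_eq
  rw [hω] at h0
  linarith
end
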